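/- Let A1^1, A1^2 be real numbers, A2^1 > (A1^1)^2/4 and A2^2 > (A1^2)^2/4 real numbers, b1, b2 > 0 positive reals, and r a real number. Suppose v1, v2 : [0,∞) → ℂ are bounded, twice continuously differentiable functions satisfying v_k'' - i·A1^k·v_k' - A2^k·v_k = 0 for k=1,2, together with the coupling conditions v1(0) = v2(0) and i·(b1·v1'(0) + b2·v2'(0)) = r·v1(0). Then v1 ≡ 0 and v2 ≡ 0. -/

import Mathlib

/-!
The characteristic polynomial `λ² - i A₁ λ - A₂` has the roots `μ, ν = i A₁/2 ± √(A₂ - A₁²/4)`,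
with `Re μ > 0 > Re ν`, and the equation factors as `(d/dt - μ)(d/dt - ν) v = 0`. Hence
`v' - ν v = e^{μt} (v'(0) - ν v(0))`, while `v' - μ v = e^{νt} (v'(0) - μ v(0))` stays bounded;
their difference `(μ - ν) v` is bounded too, which forces `v'(0) = ν v(0)` and so `v = e^{νt} v(0)`.
In the coupling condition the coefficient of `v₁(0)` then has imaginary part
`b₁ Re ν₁ + b₂ Re ν₂ < 0`, so `v₁(0) = v₂(0) = 0`.
-/

open Complex Filter Set

theorem eq_exp_mul_of_hasDerivAt {μ : ℂ} {u : ℝ → ℂ}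
    (hu : ∀ t : ℝ, 0 ≤ t → HasDerivAt u (μ * u t) t) :
    ∀ t : ℝ, 0 ≤ t → u t = exp (μ * t) * u 0 := by
  intro t ht
  set g : ℝ → ℂ := fun s => exp (-μ * s) * u s
  have hg : ∀ s : ℝ, 0 ≤ s → HasDerivAt g 0 s := fun s hs => by
    have hexp : HasDerivAt (fun s : ℝ => exp (-μ * s)) (exp (-μ * s) * -μ) s := by
      simpa using ((hasDerivAt_id s).ofReal_comp.const_mul (-μ)).cexp
    have h := hexp.mul (hu s hs)
    rwa [show exp (-μ * s) * -μ * u s + exp (-μ * s) * (μ * u s) = 0 by ring] at h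
  have hconst : g t = g 0 :=
    constant_of_has_deriv_right_zero
      (fun s hs => (hg s hs.1).continuousAt.continuousWithinAt)
      (fun s hs => (hg s hs.1).hasDerivWithinAt) t ⟨ht, le_rfl⟩
  simp only [g, ofReal_zero, mul_zero, exp_zero, one_mul] at hconst
  rw [← hconst, ← mul_assoc, ← exp_add]
  simp

theorem eq_zero_of_norm_exp_mul_le {μ c : ℂ} (hμ : 0 < μ.re) {C : ℝ}
    (hC : ∀ t : ℝ, 0 ≤ t → ‖exp (μ * t) * c‖ ≤ C) : c = 0 := by
  by_contra hc
  have hgrow : Tendsto (fun t : ℝ => ‖exp (μ * t) * c‖) atTop atTop := by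
    simp only [norm_mul, norm_exp, re_mul_ofReal]
    exact (Real.tendsto_exp_atTop.comp
      (tendsto_id.const_mul_atTop' hμ)).atTop_mul_const (norm_pos_iff.2 hc)
  obtain ⟨t, hCt, ht⟩ := ((hgrow.eventually_gt_atTop C).and (eventually_ge_atTop 0)).exists
  exact (hC t ht).not_gt hCt

theorem eq_zero_of_forall_pos {E : Type*} [TopologicalSpace E] [T2Space E] [Zero E] {F : ℝ → E}
    (hF : Continuous F) (h : ∀ t : ℝ, 0 < t → F t = 0) : ∀ t : ℝ, 0 ≤ t → F t = 0 := fun t ht =>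
  closure_minimal (s := Ioi 0) (t := {s | F s = 0}) h (isClosed_eq hF continuous_const)
    (by rwa [closure_Ioi])

section SecondOrder

variable {v : ℝ → ℂ} {μ ν : ℂ}

theorem hasDerivAt_deriv_sub_mul (hv : ContDiff ℝ 2 v) {t : ℝ}
    (hode : deriv (deriv v) t = (μ + ν) * deriv v t - μ * ν * v t) :
    HasDerivAt (fun s => deriv v s - ν * v s) (μ * (deriv v t - ν * v t)) t := by
  have h := (hv.differentiable_deriv_two t).hasDerivAt.sub
    ((hv.differentiable two_ne_zero t).hasDerivAt.const_mul ν)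
  rwa [hode, show (μ + ν) * deriv v t - μ * ν * v t - ν * deriv v t
    = μ * (deriv v t - ν * v t) by ring] at h

theorem deriv_eq_mul_of_bounded (hμ : 0 < μ.re) (hν : ν.re ≤ 0) (hv : ContDiff ℝ 2 v)
    (hbdd : ∃ C : ℝ, ∀ t : ℝ, 0 ≤ t → ‖v t‖ ≤ C)
    (hode : ∀ t : ℝ, 0 ≤ t → deriv (deriv v) t = (μ + ν) * deriv v t - μ * ν * v t) :
    ∀ t : ℝ, 0 ≤ t → deriv v t = ν * v t := by
  intro t ht
  obtain ⟨C, hC⟩ := hbdd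
  have hw := eq_exp_mul_of_hasDerivAt (u := fun s => deriv v s - ν * v s)
    fun s hs => hasDerivAt_deriv_sub_mul hv (hode s hs)
  have hu := eq_exp_mul_of_hasDerivAt (μ := ν) (u := fun s => deriv v s - μ * v s)
    fun s hs => hasDerivAt_deriv_sub_mul hv (by rw [hode s hs]; ring)
  have hw0 : deriv v 0 - ν * v 0 = 0 := by
    refine eq_zero_of_norm_exp_mul_le hμ
      (C := ‖μ - ν‖ * C + ‖deriv v 0 - μ * v 0‖) fun s hs => ?_
    rw [← hw s hs]
    calc ‖deriv v s - ν * v s‖ = ‖(μ - ν) * v s + (deriv v s - μ * v s)‖ := by ring_nf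
      _ ≤ ‖μ - ν‖ * ‖v s‖ + ‖deriv v s - μ * v s‖ := by grw [norm_add_le, norm_mul]
      _ ≤ ‖μ - ν‖ * C + ‖deriv v 0 - μ * v 0‖ := by
        gcongr
        · exact hC s hs
        · rw [hu s hs, norm_mul, norm_exp, re_mul_ofReal]
          exact mul_le_of_le_one_left (norm_nonneg _)
            (Real.exp_le_one_iff.2 (mul_nonpos_of_nonpos_of_nonneg hν hs))
  have hwt := hw t ht
  rw [hw0, mul_zero] at hwt
  exact sub_eq_zero.1 hwt

end SecondOrder

/-- The root of `λ² - i A₁ λ - A₂` with negative real part. -/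
noncomputable def decayingRoot (A1 A2 : ℝ) : ℂ := ⟨-√(A2 - A1 ^ 2 / 4), A1 / 2⟩

theorem decayingRoot_re_neg {A1 A2 : ℝ} (h : A1 ^ 2 / 4 < A2) : (decayingRoot A1 A2).re < 0 :=
  neg_neg_of_pos (Real.sqrt_pos.2 (sub_pos.2 h))

theorem hasDerivAt_decayingRoot_mul_of_bounded {A1 A2 : ℝ} (h : A1 ^ 2 / 4 < A2) {v : ℝ → ℂ}
    (hv : ContDiff ℝ 2 v) (hbdd : ∃ C : ℝ, ∀ t : ℝ, 0 ≤ t → ‖v t‖ ≤ C)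
    (hode : ∀ t : ℝ, 0 < t → deriv (deriv v) t - I * A1 * deriv v t - A2 * v t = 0) :
    ∀ t : ℝ, 0 ≤ t → HasDerivAt v (decayingRoot A1 A2 * v t) t := by
  set ν := decayingRoot A1 A2
  set δ := √(A2 - A1 ^ 2 / 4)
  have hδ : δ ^ 2 = A2 - A1 ^ 2 / 4 := Real.sq_sqrt (by linarith)
  set μ : ℂ := ⟨δ, A1 / 2⟩
  have hμ : 0 < μ.re := Real.sqrt_pos.2 (by linarith)
  have hsum : μ + ν = I * A1 := by
    simp only [μ, ν, decayingRoot, Complex.ext_iff, add_re, add_im, mul_re, mul_im, I_re, I_im,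
      ofReal_re, ofReal_im]
    constructor <;> ring
  have hprod : μ * ν = -A2 := by
    simp only [μ, ν, decayingRoot, Complex.ext_iff, mul_re, mul_im, neg_re, neg_im, ofReal_re,
      ofReal_im]
    constructor
    · linear_combination -hδ
    · ring
  have hode' : ∀ t : ℝ, 0 ≤ t → deriv (deriv v) t = (μ + ν) * deriv v t - μ * ν * v t := by
    have hcont : Continuous fun t => deriv (deriv v) t - I * A1 * deriv v t - A2 * v t := by
      have h2 : Continuous (deriv (deriv v)) := (hv.deriv' (n := 1)).continuous_deriv le_rfl
      have h1 := hv.continuous_deriv one_le_two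
      have h0 := hv.continuous
      fun_prop
    intro t ht
    rw [hsum, hprod]
    linear_combination eq_zero_of_forall_pos hcont hode t ht
  intro t ht
  rw [← deriv_eq_mul_of_bounded hμ (decayingRoot_re_neg h).le hv hbdd hode' t ht]
  exact (hv.differentiable two_ne_zero t).hasDerivAt

theorem stmt_1 (A11 A12 A21 A22 : ℝ)
    (h1 : A21 > A11 ^ 2 / 4) (h2 : A22 > A12 ^ 2 / 4)
    (b1 b2 : ℝ) (hb1 : 0 < b1) (hb2 : 0 < b2) (r : ℝ)
    (v1 v2 : ℝ → ℂ) (hv1 : ContDiff ℝ 2 v1) (hv2 : ContDiff ℝ 2 v2)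
    (hbdd1 : ∃ C : ℝ, ∀ t : ℝ, 0 ≤ t → ‖v1 t‖ ≤ C)
    (hbdd2 : ∃ C : ℝ, ∀ t : ℝ, 0 ≤ t → ‖v2 t‖ ≤ C)
    (hode1 : ∀ t : ℝ, 0 < t →
      deriv (deriv v1) t - Complex.I * (A11 : ℂ) * deriv v1 t - (A21 : ℂ) * v1 t = 0)
    (hode2 : ∀ t : ℝ, 0 < t →
      deriv (deriv v2) t - Complex.I * (A12 : ℂ) * deriv v2 t - (A22 : ℂ) * v2 t = 0)
    (hcoup1 : v1 0 = v2 0)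
    (hcoup2 : Complex.I * ((b1 : ℂ) * deriv v1 0 + (b2 : ℂ) * deriv v2 0)
      = (r : ℂ) * v1 0) :
    ∀ t : ℝ, 0 ≤ t → v1 t = 0 ∧ v2 t = 0 := by
  set ν1 := decayingRoot A11 A21
  set ν2 := decayingRoot A12 A22
  have hd1 := hasDerivAt_decayingRoot_mul_of_bounded h1 hv1 hbdd1 hode1
  have hd2 := hasDerivAt_decayingRoot_mul_of_bounded h2 hv2 hbdd2 hode2
  have hcoeff : I * (b1 * ν1 + b2 * ν2) - r ≠ 0 := fun h => by
    have him : b1 * ν1.re + b2 * ν2.re = 0 := by simpa using congrArg im h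
    linarith [mul_neg_of_pos_of_neg hb1 (decayingRoot_re_neg h1),
      mul_neg_of_pos_of_neg hb2 (decayingRoot_re_neg h2)]
  have hv0 : v1 0 = 0 := by
    refine (mul_eq_zero.1 ?_).resolve_left hcoeff
    rw [(hd1 0 le_rfl).deriv, (hd2 0 le_rfl).deriv, ← hcoup1] at hcoup2
    linear_combination hcoup2
  intro t ht
  rw [eq_exp_mul_of_hasDerivAt hd1 t ht, eq_exp_mul_of_hasDerivAt hd2 t ht, ← hcoup1, hv0]
  simp
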